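/- Let (H, ·, ∘) be a Hopf brace. Then for all g, h ∈ H one has S(g₍₁₎∘h)·g₍₂₎ = S(g₍₁₎)·(g₍₂₎∘S(h)), where S is the antipode of (H, ·). -/

import Mathlib

open scoped TensorProduct
open Coalgebra

variable (R H : Type*) [CommRing R] [AddCommGroup H] [Module R H] [Coalgebra R H]

/-- A Hopf algebra structure (multiplication, unit, antipode) on the coalgebra `H`:
the multiplication is associative with unit, comultiplication and counit are algebra
maps, and `S` is an antipode (expressed via arbitrary Sweedler representations). -/
structure HopfMul where
  mul : H →ₗ[R] H →ₗ[R] H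
  one : H
  S : H →ₗ[R] H
  mul_assoc : ∀ a b c : H, mul (mul a b) c = mul a (mul b c)
  one_mul : ∀ a : H, mul one a = a
  mul_one : ∀ a : H, mul a one = a
  comul_mul : ∀ (a b : H) {ιa : Type*} {ιb : Type*} (ra : Coalgebra.Repr R a ιa)
      (rb : Coalgebra.Repr R b ιb),
    comul (R := R) (mul a b) = ∑ i ∈ ra.index, ∑ j ∈ rb.index,
      mul (ra.left i) (rb.left j) ⊗ₜ[R] mul (ra.right i) (rb.right j)
  comul_one : comul (R := R) one = one ⊗ₜ[R] one
  counit_mul : ∀ a b : H, counit (R := R) (mul a b) = counit (R := R) a * counit (R := R) b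
  counit_one : counit (R := R) one = 1
  S_mul_left : ∀ (a : H) {ι : Type*} (r : Coalgebra.Repr R a ι),
    ∑ i ∈ r.index, mul (S (r.left i)) (r.right i) = counit (R := R) a • one
  S_mul_right : ∀ (a : H) {ι : Type*} (r : Coalgebra.Repr R a ι),
    ∑ i ∈ r.index, mul (r.left i) (S (r.right i)) = counit (R := R) a • one

universe d₁ d₂ d₃ d₄ c₁ c₂ c₃ c₄

/-- A Hopf brace: two Hopf algebra structures `dot` (written `·`) and `circ` (written `∘`)
on the same coalgebra `H`, satisfying `g∘(h·ℓ) = (g₍₁₎∘h)·S(g₍₂₎)·(g₍₃₎∘ℓ)`. -/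
structure HopfBrace where
  dot : HopfMul.{_, _, d₁, d₂, d₃, d₄} R H
  circ : HopfMul.{_, _, c₁, c₂, c₃, c₄} R H
  compat : ∀ (g h ℓ : H) {ι : Type*} (r : Coalgebra.Repr R g ι) {κ : ι → Type*}
      (r2 : ∀ i : ι, Coalgebra.Repr R (r.right i) (κ i)),
    circ.mul g (dot.mul h ℓ) = ∑ i ∈ r.index, ∑ j ∈ (r2 i).index,
      dot.mul (dot.mul (circ.mul (r.left i) h) (dot.S ((r2 i).left j)))
        (circ.mul ((r2 i).right j) ℓ)

/-!
Work in the convolution algebra of linear maps `H ⊗ H → (H, ·)`, in which `M(g ⊗ h) = g ∘ h`,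
`P(g ⊗ h) = ε(h) g` and `B(g ⊗ h) = S(g₍₁₎)·(g₍₂₎∘S(h))` live. Since `Δ` is multiplicative
for `∘`, the antipode axiom of `·` applied to `g ∘ h` says that `S ∘ M` is a left inverse of `M`.
The brace compatibility with `ℓ = S(h₍₂₎)`, together with `1_∘ = 1_·`, gives `M * B = P`.
Hence `(S ∘ M) * P = B`, and evaluating both sides at `g ⊗ h` is the claimed identity.
-/

open WithConv

noncomputable section

namespace Coalgebra

universe v

variable {R A M : Type*} [CommSemiring R] [AddCommMonoid A] [Module R A] [AddCommMonoid M]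
  {a : A} {ι : Type*}

namespace Repr

variable [CoalgebraStruct R A]

def shrinkIndex (r : Repr R a ι) : ULift.{v} (Fin r.index.card) → ι :=
  fun i => r.index.equivFin.symm i.down

lemma sum_shrinkIndex (r : Repr R a ι) (f : ι → M) :
    ∑ i : ULift.{v} (Fin r.index.card), f (r.shrinkIndex i) = ∑ i ∈ r.index, f i := by
  rw [← Finset.sum_coe_sort r.index]
  exact Fintype.sum_equiv (Equiv.ulift.trans r.index.equivFin.symm) _ _ fun _ => rfl

/-- The axioms of `HopfMul` and `HopfBrace` only speak about representations indexed in fixed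
universes; `shrink` moves any representation into an arbitrary universe. -/
def shrink (r : Repr R a ι) : Repr R a (ULift.{v} (Fin r.index.card)) where
  index := Finset.univ
  left := r.left ∘ r.shrinkIndex
  right := r.right ∘ r.shrinkIndex
  eq := (r.sum_shrinkIndex fun i => r.left i ⊗ₜ[R] r.right i).trans r.eq

def coalgebraTmul {B κ : Type*} [AddCommMonoid B] [Module R B] [CoalgebraStruct R B] {b : B}
    (ra : Repr R a ι) (rb : Repr R b κ) : Repr R (a ⊗ₜ[R] b) (ι × κ) where
  index := ra.index ×ˢ rb.index
  left p := ra.left p.1 ⊗ₜ rb.left p.2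
  right p := ra.right p.1 ⊗ₜ rb.right p.2
  eq := by
    simp [← ra.eq, ← rb.eq, TensorProduct.sum_tmul ra.index, TensorProduct.tmul_sum,
      ← Finset.sum_product']

end Repr

variable [Coalgebra R A] [Module R M]

lemma sum_counit_smul' (r : Repr R a ι) :
    ∑ i ∈ r.index, counit (R := R) (r.right i) • r.left i = a := by
  simpa only [map_sum, _root_.TensorProduct.rid_tmul, one_smul]
    using congrArg (_root_.TensorProduct.rid R A) (sum_tmul_counit_eq r)

lemma sum_counit_smul_map (r : Repr R a ι) (f : A →ₗ[R] M) :
    ∑ i ∈ r.index, counit (R := R) (r.left i) • f (r.right i) = f a := by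
  simp_rw [← map_smul, ← map_sum, sum_counit_smul]

lemma sum_counit_smul_map' (r : Repr R a ι) (f : A →ₗ[R] M) :
    ∑ i ∈ r.index, counit (R := R) (r.right i) • f (r.left i) = f a := by
  simp_rw [← map_smul, ← map_sum, sum_counit_smul']

end Coalgebra

namespace HopfMul

variable {R H} (D : HopfMul R H) {a b : H} {ι κ : Type*}

lemma S_mul_left' (r : Repr R a ι) :
    ∑ i ∈ r.index, D.mul (D.S (r.left i)) (r.right i) = counit (R := R) a • D.one :=
  (r.sum_shrinkIndex _).symm.trans (D.S_mul_left a r.shrink)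

lemma S_mul_right' (r : Repr R a ι) :
    ∑ i ∈ r.index, D.mul (r.left i) (D.S (r.right i)) = counit (R := R) a • D.one :=
  (r.sum_shrinkIndex _).symm.trans (D.S_mul_right a r.shrink)

lemma comul_mul' (ra : Repr R a ι) (rb : Repr R b κ) :
    comul (R := R) (D.mul a b) = ∑ i ∈ ra.index, ∑ j ∈ rb.index,
      D.mul (ra.left i) (rb.left j) ⊗ₜ[R] D.mul (ra.right i) (rb.right j) := by
  rw [D.comul_mul a b ra.shrink rb.shrink, ← ra.sum_shrinkIndex]
  exact Finset.sum_congr rfl fun i _ => rb.sum_shrinkIndex fun j =>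
    D.mul (ra.shrink.left i) (rb.left j) ⊗ₜ[R] D.mul (ra.shrink.right i) (rb.right j)

def mulRepr (ra : Repr R a ι) (rb : Repr R b κ) : Repr R (D.mul a b) (ι × κ) where
  index := ra.index ×ˢ rb.index
  left p := D.mul (ra.left p.1) (rb.left p.2)
  right p := D.mul (ra.right p.1) (rb.right p.2)
  eq := by rw [Finset.sum_product, D.comul_mul' ra rb]

/-- `H` as an `R`-algebra under `D.mul`; a type synonym, since `H` carries two multiplications. -/
def Alg (_ : HopfMul R H) : Type _ := H

instance : AddCommGroup D.Alg := inferInstanceAs (AddCommGroup H)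

instance : Module R D.Alg := inferInstanceAs (Module R H)

instance : Ring D.Alg :=
  { (inferInstance : AddCommGroup D.Alg) with
    mul := fun a b => D.mul a b
    one := D.one
    mul_assoc := D.mul_assoc
    one_mul := D.one_mul
    mul_one := D.mul_one
    left_distrib := fun a b c => map_add (D.mul a) b c
    right_distrib := fun a b c => LinearMap.map_add₂ D.mul a b c
    zero_mul := fun a => LinearMap.map_zero₂ D.mul a
    mul_zero := fun a => map_zero (D.mul a) }

instance : Algebra R D.Alg :=
  .ofModule (fun r x y => LinearMap.map_smul₂ D.mul r x y) fun r x y => map_smul (D.mul x) r y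

def toAlg : H ≃ₗ[R] D.Alg := LinearEquiv.refl R H

lemma toAlg_one : D.toAlg D.one = 1 := rfl

end HopfMul

namespace HopfBrace

variable {R H} (Br : HopfBrace R H)

lemma compat' (g h ℓ : H) {ι : Type*} (r : Repr R g ι) {κ : ι → Type*}
    (r2 : ∀ i, Repr R (r.right i) (κ i)) :
    Br.circ.mul g (Br.dot.mul h ℓ) = ∑ i ∈ r.index, ∑ j ∈ (r2 i).index,
      Br.dot.mul (Br.dot.mul (Br.circ.mul (r.left i) h) (Br.dot.S ((r2 i).left j)))
        (Br.circ.mul ((r2 i).right j) ℓ) := by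
  rw [Br.compat g h ℓ r.shrink fun i => (r2 (r.shrinkIndex i)).shrink, ← r.sum_shrinkIndex]
  exact Finset.sum_congr rfl fun i _ => (r2 (r.shrinkIndex i)).sum_shrinkIndex fun j =>
    Br.dot.mul (Br.dot.mul (Br.circ.mul (r.shrink.left i) h) (Br.dot.S ((r2 _).left j)))
      (Br.circ.mul ((r2 _).right j) ℓ)

lemma circ_one_eq_dot_one : Br.circ.one = Br.dot.one := by
  set u := Br.circ.one
  let ru : Repr R u Unit := ⟨{()}, fun _ => u, fun _ => u, by simp [u, Br.circ.comul_one]⟩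
  have hS : Br.dot.S u = Br.dot.one := by
    have h := Br.compat' u Br.dot.one Br.dot.one ru fun _ => ru
    simp only [ru, Finset.sum_singleton, u, Br.circ.one_mul, Br.dot.mul_one, Br.dot.one_mul] at h
    exact h.symm
  simpa [ru, hS, Br.dot.mul_one, u, Br.circ.counit_one] using Br.dot.S_mul_right' ru

abbrev Conv : Type _ := WithConv (H ⊗[R] H →ₗ[R] Br.dot.Alg)

def circMap : Br.Conv := toConv (Br.dot.toAlg.toLinearMap ∘ₗ TensorProduct.lift Br.circ.mul)

def antipodeCircMap : Br.Conv :=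
  toConv (Br.dot.toAlg.toLinearMap ∘ₗ Br.dot.S ∘ₗ TensorProduct.lift Br.circ.mul)

def fstMap : Br.Conv :=
  toConv (Br.dot.toAlg.toLinearMap ∘ₗ (_root_.TensorProduct.rid R H).toLinearMap ∘ₗ
    (counit (R := R)).lTensor H)

def antipodeMulCircAntipodeMap : Br.Conv :=
  toConv (Br.dot.toAlg.toLinearMap ∘ₗ Br.dot.S ∘ₗ (_root_.TensorProduct.rid R H).toLinearMap ∘ₗ
    (counit (R := R)).lTensor H) *
  toConv (Br.dot.toAlg.toLinearMap ∘ₗ TensorProduct.lift Br.circ.mul ∘ₗ Br.dot.S.lTensor H)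

@[simp] lemma circMap_tmul (g h : H) :
    Br.circMap (g ⊗ₜ h) = Br.dot.toAlg (Br.circ.mul g h) := rfl

@[simp] lemma fstMap_tmul (g h : H) :
    Br.fstMap (g ⊗ₜ h) = Br.dot.toAlg (counit (R := R) h • g) := rfl

lemma antipodeMulCircAntipodeMap_tmul (g h : H) {ι : Type*} (r : Repr R g ι) :
    Br.antipodeMulCircAntipodeMap (g ⊗ₜ h) = Br.dot.toAlg
      (∑ i ∈ r.index, Br.dot.mul (Br.dot.S (r.left i)) (Br.circ.mul (r.right i) (Br.dot.S h))) := by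
  rw [antipodeMulCircAntipodeMap, (r.coalgebraTmul (ℛ R h)).convMul_apply]
  simp only [Repr.coalgebraTmul, LinearMap.coe_comp, LinearEquiv.coe_coe, Function.comp_apply,
    LinearMap.lTensor_tmul, TensorProduct.rid_tmul, map_smul, TensorProduct.lift.tmul,
    Algebra.smul_mul_assoc, Finset.sum_product, map_sum]
  exact Finset.sum_congr rfl fun i _ => sum_counit_smul_map (ℛ R h)
    (Br.dot.toAlg.toLinearMap ∘ₗ Br.dot.mul (Br.dot.S (r.left i)) ∘ₗ Br.circ.mul (r.right i) ∘ₗ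
      Br.dot.S)

lemma antipodeCircMap_mul_fstMap_tmul (g h : H) {ι : Type*} (r : Repr R g ι) :
    (Br.antipodeCircMap * Br.fstMap) (g ⊗ₜ h) = Br.dot.toAlg
      (∑ i ∈ r.index, Br.dot.mul (Br.dot.S (Br.circ.mul (r.left i) h)) (r.right i)) := by
  rw [(r.coalgebraTmul (ℛ R h)).convMul_apply]
  simp only [Repr.coalgebraTmul, antipodeCircMap, fstMap, LinearMap.coe_comp,
    LinearEquiv.coe_coe, Function.comp_apply, TensorProduct.lift.tmul, LinearMap.lTensor_tmul,
    TensorProduct.rid_tmul, map_smul, Algebra.mul_smul_comm, Finset.sum_product, map_sum]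
  exact Finset.sum_congr rfl fun i _ => sum_counit_smul_map' (ℛ R h)
    (Br.dot.toAlg.toLinearMap ∘ₗ Br.dot.mul.flip (r.right i) ∘ₗ Br.dot.S ∘ₗ
      Br.circ.mul (r.left i))

lemma antipodeCircMap_mul_circMap : Br.antipodeCircMap * Br.circMap = 1 := by
  refine WithConv.ext (TensorProduct.ext' fun g h => ?_)
  let rgh := Br.circ.mulRepr (ℛ R g) (ℛ R h)
  rw [((ℛ R g).coalgebraTmul (ℛ R h)).convMul_apply]
  calc
    _ = Br.dot.toAlg (∑ p ∈ rgh.index, Br.dot.mul (Br.dot.S (rgh.left p)) (rgh.right p)) :=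
      (map_sum _ _ _).symm
    _ = _ := by
      rw [Br.dot.S_mul_left', Br.circ.counit_mul, map_smul, HopfMul.toAlg_one,
        LinearMap.convOne_apply, _root_.TensorProduct.counit_tmul,
        Algebra.algebraMap_eq_smul_one, mul_comm, smul_eq_mul]

lemma circMap_mul_antipodeMulCircAntipodeMap :
    Br.circMap * Br.antipodeMulCircAntipodeMap = Br.fstMap := by
  refine WithConv.ext (TensorProduct.ext' fun g h => ?_)
  rw [((ℛ R g).coalgebraTmul (ℛ R h)).convMul_apply]
  simp only [Repr.coalgebraTmul, Finset.sum_product, circMap_tmul, fstMap_tmul,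
    Br.antipodeMulCircAntipodeMap_tmul _ _ (ℛ R _)]
  rw [Finset.sum_comm]
  calc
    _ = ∑ j ∈ (ℛ R h).index, Br.dot.toAlg
        (Br.circ.mul g (Br.dot.mul ((ℛ R h).left j) (Br.dot.S ((ℛ R h).right j)))) := by
      refine Finset.sum_congr rfl fun j _ => ?_
      rw [Br.compat' _ _ _ (ℛ R g) (fun i => ℛ R _), map_sum]
      refine Finset.sum_congr rfl fun i _ => ?_
      rw [map_sum, Finset.mul_sum]
      exact Finset.sum_congr rfl fun k _ => congrArg Br.dot.toAlg (Br.dot.mul_assoc _ _ _).symm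
    _ = _ := by
      rw [← map_sum, ← map_sum, Br.dot.S_mul_right', map_smul, ← Br.circ_one_eq_dot_one,
        Br.circ.mul_one]

lemma antipodeCircMap_mul_fstMap :
    Br.antipodeCircMap * Br.fstMap = Br.antipodeMulCircAntipodeMap := by
  rw [← circMap_mul_antipodeMulCircAntipodeMap, ← mul_assoc, antipodeCircMap_mul_circMap,
    one_mul]

end HopfBrace

end

/-- In a Hopf brace, `S(g₍₁₎∘h)·g₍₂₎ = S(g₍₁₎)·(g₍₂₎∘S(h))`. -/
theorem hopfBrace_antipode_identity (Br : HopfBrace R H) (g h : H)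
    {ι : Type*} (r : Coalgebra.Repr R g ι) :
    ∑ i ∈ r.index, Br.dot.mul (Br.dot.S (Br.circ.mul (r.left i) h)) (r.right i) =
      ∑ i ∈ r.index, Br.dot.mul (Br.dot.S (r.left i))
        (Br.circ.mul (r.right i) (Br.dot.S h)) := by
  apply Br.dot.toAlg.injective
  rw [← Br.antipodeCircMap_mul_fstMap_tmul g h r, ← Br.antipodeMulCircAntipodeMap_tmul g h r,
    Br.antipodeCircMap_mul_fstMap]
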